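/- There exists a probability density function f supported on [0,1] that is not symmetric around 1/2 (hence the resulting digits are not all Bernoulli(1/2)), yet for a random variable X with density f the first three binary digits B_1(X), B_2(X), B_3(X) are pairwise independent. -/

import Mathlib

open MeasureTheory ProbabilityTheory Set

/-- The `i`-th binary digit of `x ∈ [0,1]`: `B_i(x) = ⌊2^i x⌋ mod 2`. -/
noncomputable def binDigit (i : ℕ) (x : ℝ) : ℤ := ⌊(2:ℝ)^i * x⌋ % 2

/-!
Take the density `1/2` on `[0, 1/2)` and `3/2` on `[1/2, 1)`. The first three digits of `x` are
the binary digits of the cell index `⌊8x⌋`, and since the density is constant on the cells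
`[k/8, (k+1)/8)`, the law of `⌊8X⌋` puts mass `1/16` on each of `0, …, 3` and `3/16` on each of
`4, …, 7`. This is the law of `4B₁ + 2B₂ + B₃` for independent `B₁ ~ Bernoulli(3/4)` and fair
coins `B₂, B₃`: conditionally on the first digit, `X` is uniform on a half-interval.
-/

theorem measurable_binDigit (n : ℕ) : Measurable (binDigit n) :=
  (measurable_from_top (f := fun k : ℤ => k % 2)).comp (measurable_const_mul _).floor

theorem measurableSet_setOf_binDigit_eq_one (n : ℕ) :
    MeasurableSet {x | binDigit n x = 1} :=
  measurable_binDigit n (measurableSet_singleton 1)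

theorem binDigit_eq_indicator (n : ℕ) :
    binDigit n = {x | binDigit n x = 1}.indicator 1 := by
  ext x
  rcases Int.emod_two_eq_zero_or_one ⌊(2:ℝ)^n * x⌋ with h | h <;> simp [binDigit, h]

theorem binDigit_eq_floor_div {i n : ℕ} (hin : i ≤ n) (x : ℝ) :
    binDigit i x = ⌊(2:ℝ)^n * x⌋ / 2^(n - i) % 2 := by
  have hpow : (2:ℝ)^n = 2^i * 2^(n - i) := by rw [← pow_add, Nat.add_sub_cancel' hin]
  have : (2:ℝ)^i * x = (2^n * x) / ((2^(n - i) : ℕ) : ℝ) := by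
    rw [hpow]; push_cast; field_simp
  rw [binDigit, this, Int.floor_div_natCast]
  push_cast; rfl

theorem IndepSet.indepFun_indicator {Ω β : Type*} {mΩ : MeasurableSpace Ω} [MeasurableSpace β]
    [Zero β] {μ : Measure Ω} {s t : Set Ω} (h : IndepSet s t μ) (b c : β) :
    IndepFun (s.indicator fun _ => b) (t.indicator fun _ => c) μ := by
  rw [IndepFun_iff_Indep]
  rw [IndepSet_iff_Indep] at h
  have hs : Measurable[MeasurableSpace.generateFrom {s}] (s.indicator fun _ => b) :=
    measurable_const.indicator (MeasurableSpace.measurableSet_generateFrom (mem_singleton _))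
  have ht : Measurable[MeasurableSpace.generateFrom {t}] (t.indicator fun _ => c) :=
    measurable_const.indicator (MeasurableSpace.measurableSet_generateFrom (mem_singleton _))
  exact indep_of_indep_of_le_right (indep_of_indep_of_le_left h hs.comap_le) ht.comap_le

theorem IndepFun.comp_of_map {Ω α β γ : Type*} {mΩ : MeasurableSpace Ω} [MeasurableSpace α]
    [MeasurableSpace β] [MeasurableSpace γ] {μ : Measure Ω} {Y : Ω → α} {g : α → β} {h : α → γ}
    (hind : IndepFun g h (μ.map Y)) (hY : Measurable Y) (hg : Measurable g) (hh : Measurable h) :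
    IndepFun (g ∘ Y) (h ∘ Y) μ := by
  rw [indepFun_iff_measure_inter_preimage_eq_mul] at hind ⊢
  intro s t hs ht
  have := hind s t hs ht
  rwa [Measure.map_apply hY ((hg hs).inter (hh ht)), Measure.map_apply hY (hg hs),
    Measure.map_apply hY (hh ht)] at this

theorem map_floor_mul_withDensity {N : ℝ} (hN : 0 < N) (w : ℤ → ℝ) {s : Finset ℤ}
    (hw : ∀ k ∉ s, w k = 0) :
    (volume.withDensity fun x => ENNReal.ofReal (w ⌊N * x⌋)).map (fun x => ⌊N * x⌋) =
      ∑ k ∈ s, ENNReal.ofReal (w k / N) • Measure.dirac k := by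
  have hfloor : Measurable fun x : ℝ => ⌊N * x⌋ := (measurable_const_mul N).floor
  refine Measure.ext_of_singleton fun j => ?_
  have hcell : (fun x : ℝ => ⌊N * x⌋) ⁻¹' {j} = Ico (j / N) ((j + 1) / N) := by
    ext x
    simp only [mem_preimage, mem_singleton_iff, Int.floor_eq_iff, mem_Ico, div_le_iff₀ hN,
      lt_div_iff₀ hN]
    constructor <;> rintro ⟨h1, h2⟩ <;> constructor <;> linarith
  have hj := hfloor (measurableSet_singleton j)
  rw [Measure.map_apply hfloor (measurableSet_singleton j), withDensity_apply _ hj,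
    setLIntegral_congr_fun hj (g := fun _ => ENNReal.ofReal (w j)) fun x hx => by
      rw [show ⌊N * x⌋ = j from hx],
    setLIntegral_const, hcell, Real.volume_Ico, show ((j:ℝ) + 1) / N - j / N = N⁻¹ by ring,
    ← ENNReal.ofReal_mul' (inv_nonneg.2 hN.le), ← div_eq_mul_inv]
  simp only [Measure.coe_finsetSum, Finset.sum_apply, Measure.smul_apply, Measure.dirac_apply,
    smul_eq_mul, indicator_apply, mem_singleton_iff, Pi.one_apply, mul_ite, mul_one, mul_zero,
    Finset.sum_ite_eq']
  split_ifs with hjs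
  · rfl
  · simp [hw j hjs]

theorem finsetSum_ofReal_smul_dirac_apply {α : Type*} [MeasurableSpace α]
    [MeasurableSingletonClass α] (s : Finset α) {p : α → ℝ} (hp : ∀ a ∈ s, 0 ≤ p a) (t : Set α)
    [DecidablePred (· ∈ t)] :
    (∑ a ∈ s, ENNReal.ofReal (p a) • Measure.dirac a) t =
      ENNReal.ofReal (∑ a ∈ s with a ∈ t, p a) := by
  rw [ENNReal.ofReal_sum_of_nonneg fun a ha => hp a (Finset.mem_filter.1 ha).1, Finset.sum_filter]
  simp only [Measure.coe_finsetSum, Finset.sum_apply, Measure.smul_apply, Measure.dirac_apply,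
    smul_eq_mul]
  refine Finset.sum_congr rfl fun a _ => ?_
  by_cases ha : a ∈ t <;> simp [ha]

theorem Ico_zero_eight : Finset.Ico (0:ℤ) 8 = {0, 1, 2, 3, 4, 5, 6, 7} := rfl

noncomputable def skewWeight (k : ℤ) : ℝ :=
  if k ∈ Finset.Ico 0 4 then 1/2 else if k ∈ Finset.Ico 4 8 then 3/2 else 0

noncomputable def skewDensity (x : ℝ) : ℝ := skewWeight ⌊8 * x⌋

noncomputable def skewLaw : Measure ℝ :=
  volume.withDensity fun x => ENNReal.ofReal (skewDensity x)

theorem skewWeight_nonneg (k : ℤ) : 0 ≤ skewWeight k := by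
  unfold skewWeight; split_ifs <;> norm_num

theorem skewWeight_eq_zero {k : ℤ} (hk : k ∉ Finset.Ico 0 8) : skewWeight k = 0 := by
  simp only [Finset.mem_Ico] at hk
  rw [skewWeight, if_neg (by simp only [Finset.mem_Ico]; omega),
    if_neg (by simp only [Finset.mem_Ico]; omega)]

theorem skewDensity_eq_zero {x : ℝ} (hx : x ∉ Icc 0 1) : skewDensity x = 0 := by
  refine skewWeight_eq_zero fun hk => hx ?_
  rw [Finset.mem_Ico, Int.floor_nonneg, Int.floor_lt] at hk
  push_cast at hk
  constructor <;> linarith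

theorem skewLaw_preimage_floor (F : Set ℤ) [DecidablePred (· ∈ F)] :
    skewLaw ((fun x : ℝ => ⌊8 * x⌋) ⁻¹' F) =
      ENNReal.ofReal (∑ k ∈ Finset.Ico 0 8 with k ∈ F, skewWeight k / 8) := by
  unfold skewLaw skewDensity
  rw [← Measure.map_apply (measurable_const_mul 8).floor .of_discrete,
    map_floor_mul_withDensity (by norm_num) skewWeight fun k => skewWeight_eq_zero,
    finsetSum_ofReal_smul_dirac_apply _ fun k _ => div_nonneg (skewWeight_nonneg k) (by norm_num)]

instance isProbabilityMeasure_skewLaw : IsProbabilityMeasure skewLaw := by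
  constructor
  rw [← preimage_univ, skewLaw_preimage_floor, ← ENNReal.ofReal_one]
  congr 1
  simp only [mem_univ, Finset.filter_true, Ico_zero_eight]
  norm_num [Finset.sum_insert, skewWeight]

theorem integral_skewDensity : ∫ x, skewDensity x = 1 := by
  have hmeas : Measurable skewDensity := measurable_from_top.comp (measurable_const_mul 8).floor
  rw [integral_eq_lintegral_of_nonneg_ae (f := skewDensity)
      (.of_forall fun x => skewWeight_nonneg _) hmeas.aestronglyMeasurable,
    ← setLIntegral_univ, ← withDensity_apply _ MeasurableSet.univ]
  change (skewLaw univ).toReal = 1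
  simp

theorem setOf_binDigit_eq_one {i : ℕ} (hi : i ≤ 3) :
    {x | binDigit i x = 1} = (fun x : ℝ => ⌊8 * x⌋) ⁻¹' {k | k / 2^(3 - i) % 2 = 1} := by
  ext x
  simp only [binDigit_eq_floor_div hi, mem_ofPred_eq, preimage_ofPred_eq]
  norm_num

theorem skewLaw_binDigit_one : skewLaw {x | binDigit 1 x = 1} = ENNReal.ofReal (3/4) := by
  rw [setOf_binDigit_eq_one (by norm_num), skewLaw_preimage_floor]
  congr 1
  simp only [Finset.sum_filter, mem_ofPred_eq, Ico_zero_eight]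
  norm_num [Finset.sum_insert, skewWeight]

theorem sum_skewWeight_digits_mul {i j : ℕ} (hi : 1 ≤ i) (hij : i < j) (hj : j ≤ 3) :
    ∑ k ∈ Finset.Ico 0 8 with k ∈ {k : ℤ | k / 2^(3 - i) % 2 = 1} ∩ {k | k / 2^(3 - j) % 2 = 1},
        skewWeight k / 8 =
      (∑ k ∈ Finset.Ico 0 8 with k ∈ {k : ℤ | k / 2^(3 - i) % 2 = 1}, skewWeight k / 8) *
        ∑ k ∈ Finset.Ico 0 8 with k ∈ {k : ℤ | k / 2^(3 - j) % 2 = 1}, skewWeight k / 8 := by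
  simp only [Finset.sum_filter, mem_inter_iff, mem_ofPred_eq, Ico_zero_eight]
  obtain ⟨rfl, rfl⟩ | ⟨rfl, rfl⟩ | ⟨rfl, rfl⟩ :
      (i = 1 ∧ j = 2) ∨ (i = 1 ∧ j = 3) ∨ (i = 2 ∧ j = 3) := by omega
  all_goals norm_num [Finset.sum_insert, skewWeight]

theorem indepFun_binDigit_skewLaw {i j : ℕ} (hi : 1 ≤ i) (hij : i < j) (hj : j ≤ 3) :
    IndepFun (binDigit i) (binDigit j) skewLaw := by
  rw [binDigit_eq_indicator i, binDigit_eq_indicator j]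
  refine IndepSet.indepFun_indicator ?_ 1 1
  rw [indepSet_iff_measure_inter_eq_mul (measurableSet_setOf_binDigit_eq_one i)
      (measurableSet_setOf_binDigit_eq_one j) skewLaw,
    setOf_binDigit_eq_one (hij.trans_le hj).le, setOf_binDigit_eq_one hj, ← preimage_inter,
    skewLaw_preimage_floor, skewLaw_preimage_floor, skewLaw_preimage_floor,
    ← ENNReal.ofReal_mul (Finset.sum_nonneg fun k _ => by have := skewWeight_nonneg k; positivity),
    sum_skewWeight_digits_mul hi hij hj]

/-- There is a probability density `f` supported on `[0,1]` that is not symmetric around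
`1/2` (hence the resulting digits are not all Bernoulli(1/2)), yet for any random variable
`X` with density `f` the first three binary digits are pairwise independent. -/
theorem exists_nonsymmetric_density_with_pairwise_indep_digits :
    ∃ f : ℝ → ℝ,
      (∀ x, 0 ≤ f x) ∧
      (∀ x, x ∉ Set.Icc (0:ℝ) 1 → f x = 0) ∧
      (∫ x, f x = 1) ∧
      ¬ (∀ ε ∈ Set.Icc (0:ℝ) (1/2), f (1/2 - ε) = f (1/2 + ε)) ∧
      ∀ (Ω : Type) (_ : MeasureSpace Ω) (_ : IsProbabilityMeasure (ℙ : Measure Ω))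
        (X : Ω → ℝ), Measurable X →
        Measure.map X ℙ = volume.withDensity (fun x => ENNReal.ofReal (f x)) →
        (∃ n : ℕ, 1 ≤ n ∧ ℙ {ω | binDigit n (X ω) = 1} ≠ 1/2) ∧
        IndepFun (fun ω => binDigit 1 (X ω)) (fun ω => binDigit 2 (X ω)) ℙ ∧
        IndepFun (fun ω => binDigit 1 (X ω)) (fun ω => binDigit 3 (X ω)) ℙ ∧
        IndepFun (fun ω => binDigit 2 (X ω)) (fun ω => binDigit 3 (X ω)) ℙ := by
  refine ⟨skewDensity, fun x => skewWeight_nonneg _, fun x => skewDensity_eq_zero,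
    integral_skewDensity, fun h => ?_, fun Ω _ _ X hX hmap => ?_⟩
  · have := h (1/4) (by norm_num)
    norm_num [skewDensity, skewWeight, Int.floor_eq_iff] at this
  have hindep {i j : ℕ} (hi : 1 ≤ i) (hij : i < j) (hj : j ≤ 3) :
      IndepFun (fun ω => binDigit i (X ω)) (fun ω => binDigit j (X ω)) ℙ :=
    IndepFun.comp_of_map (hmap ▸ indepFun_binDigit_skewLaw hi hij hj) hX
      (measurable_binDigit i) (measurable_binDigit j)
  refine ⟨⟨1, le_rfl, ?_⟩, hindep le_rfl (by norm_num) (by norm_num),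
    hindep le_rfl (by norm_num) le_rfl, hindep (by norm_num) (by norm_num) le_rfl⟩
  rw [show {ω | binDigit 1 (X ω) = 1} = X ⁻¹' {x | binDigit 1 x = 1} from rfl,
    ← Measure.map_apply hX (measurableSet_setOf_binDigit_eq_one 1), hmap]
  change skewLaw _ ≠ _
  rw [skewLaw_binDigit_one]
  intro h
  have := congrArg ENNReal.toReal h
  norm_num at this
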